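/- arXiv:math/0606608 — 7 statements merged into one kernel-verified Lean document; each statement's English description precedes it below -/
import Mathlib

section
/- Let K and J be nonempty sets and f : K × J → ℝ a strictly positive function such that for all A, B ∈ J the supremum sup_{P∈K} f(P,A)/f(P,B) is finite. Then the function d^s : J × J → ℝ defined by d^s(A,B) = ln( (sup_{P∈K} f(P,A)/f(P,B)) / (inf_{P∈K} f(P,A)/f(P,B)) ) is a semidistance on J: d^s(A,A) = 0 for all A ∈ J, d^s(A,B) = d^s(B,A) for all A, B ∈ J, d^s(A,B) ≥ 0, and d^s(A,B) + d^s(B,C) ≥ d^s(A,C) for all A, B, C ∈ J. -/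
/-- Extended Barbilian semidistance: if `f : K × J → ℝ` is strictly positive and all
ratios `g_{AB}(P) = f(P,A)/f(P,B)` are bounded above on `K`, then
`dˢ(A,B) = log (sup g_{AB} / inf g_{AB})` is a semidistance on `J`. -/
theorem barbilian_extended_semidistance {K J : Type*} [Nonempty K] [Nonempty J]
    (f : K → J → ℝ) (hf : ∀ P A, 0 < f P A)
    (hbdd : ∀ A B : J, BddAbove (Set.range fun P => f P A / f P B)) :
    let ds : J → J → ℝ := fun A B =>
      Real.log (sSup (Set.range fun P => f P A / f P B) /
        sInf (Set.range fun P => f P A / f P B))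
    (∀ A : J, ds A A = 0) ∧
    (∀ A B : J, ds A B = ds B A) ∧
    (∀ A B : J, 0 ≤ ds A B) ∧
    (∀ A B C : J, ds A C ≤ ds A B + ds B C) := by
  intro ds
  obtain ⟨P₀⟩ := ‹Nonempty K›
  have hne : ∀ A B : J, (Set.range fun P => f P A / f P B).Nonempty :=
    fun A B => Set.range_nonempty _
  have hbb : ∀ A B : J, BddBelow (Set.range fun P => f P A / f P B) := by
    intro A B
    refine ⟨0, ?_⟩
    rintro x ⟨P, rfl⟩
    exact (div_pos (hf P A) (hf P B)).le
  have hsup_pos : ∀ A B : J, 0 < sSup (Set.range fun P => f P A / f P B) := by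
    intro A B
    have h1 : f P₀ A / f P₀ B ≤ sSup (Set.range fun P => f P A / f P B) :=
      le_csSup (hbdd A B) ⟨P₀, rfl⟩
    have h2 : 0 < f P₀ A / f P₀ B := div_pos (hf P₀ A) (hf P₀ B)
    linarith
  have hinf : ∀ A B : J, sInf (Set.range fun P => f P A / f P B)
      = (sSup (Set.range fun P => f P B / f P A))⁻¹ := by
    intro A B
    have h1 : (sSup (Set.range fun P => f P B / f P A))⁻¹
        ≤ sInf (Set.range fun P => f P A / f P B) := by
      refine le_csInf (hne A B) ?_
      rintro x ⟨P, rfl⟩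
      rw [inv_le_comm₀ (hsup_pos B A) (div_pos (hf P A) (hf P B))]
      have : (f P A / f P B)⁻¹ = f P B / f P A := by
        rw [inv_div]
      rw [this]
      exact le_csSup (hbdd B A) ⟨P, rfl⟩
    have hinfpos : 0 < sInf (Set.range fun P => f P A / f P B) :=
      lt_of_lt_of_le (inv_pos.2 (hsup_pos B A)) h1
    have h2 : sSup (Set.range fun P => f P B / f P A)
        ≤ (sInf (Set.range fun P => f P A / f P B))⁻¹ := by
      refine csSup_le (hne B A) ?_
      rintro x ⟨P, rfl⟩
      rw [le_inv_comm₀ (div_pos (hf P B) (hf P A)) hinfpos]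
      have : (f P B / f P A)⁻¹ = f P A / f P B := by rw [inv_div]
      rw [this]
      exact csInf_le (hbb A B) ⟨P, rfl⟩
    refine le_antisymm ?_ h1
    rw [← inv_inv (sInf (Set.range fun P => f P A / f P B))]
    exact inv_anti₀ (hsup_pos B A) h2
  have hds : ∀ A B : J, ds A B = Real.log (sSup (Set.range fun P => f P A / f P B))
      + Real.log (sSup (Set.range fun P => f P B / f P A)) := by
    intro A B
    show Real.log _ = _
    rw [hinf, div_eq_mul_inv, inv_inv, Real.log_mul (hsup_pos A B).ne' (hsup_pos B A).ne']
  have hsup_mul : ∀ A B C : J, sSup (Set.range fun P => f P A / f P C)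
      ≤ sSup (Set.range fun P => f P A / f P B) * sSup (Set.range fun P => f P B / f P C) := by
    intro A B C
    refine csSup_le (hne A C) ?_
    rintro x ⟨P, rfl⟩
    have heq : f P A / f P C = (f P A / f P B) * (f P B / f P C) := by
      rw [div_mul_div_comm, mul_comm (f P B) (f P C), mul_div_mul_right _ _ (hf P B).ne']
    show f P A / f P C ≤ _
    rw [heq]
    exact mul_le_mul (le_csSup (hbdd A B) ⟨P, rfl⟩) (le_csSup (hbdd B C) ⟨P, rfl⟩)
      (div_pos (hf P B) (hf P C)).le (hsup_pos A B).le
  refine ⟨?_, ?_, ?_, ?_⟩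
  · intro A
    have hset : (Set.range fun P => f P A / f P A) = {1} := by
      ext x
      simp only [Set.mem_range, Set.mem_singleton_iff, div_self (hf _ A).ne']
      constructor
      · rintro ⟨P, rfl⟩; rfl
      · rintro rfl; exact ⟨P₀, rfl⟩
    rw [hds, hset, csSup_singleton, Real.log_one, add_zero]
  · intro A B
    rw [hds, hds, add_comm]
  · intro A B
    rw [hds, ← Real.log_mul (hsup_pos A B).ne' (hsup_pos B A).ne']
    apply Real.log_nonneg
    have h1 : f P₀ A / f P₀ B ≤ sSup (Set.range fun P => f P A / f P B) :=
      le_csSup (hbdd A B) ⟨P₀, rfl⟩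
    have h2 : f P₀ B / f P₀ A ≤ sSup (Set.range fun P => f P B / f P A) :=
      le_csSup (hbdd B A) ⟨P₀, rfl⟩
    calc (1:ℝ) = (f P₀ A / f P₀ B) * (f P₀ B / f P₀ A) := by
          rw [div_mul_div_comm, mul_comm (f P₀ B) (f P₀ A),
            div_self (mul_pos (hf P₀ A) (hf P₀ B)).ne']
    _ ≤ _ := mul_le_mul h1 h2 (div_pos (hf P₀ B) (hf P₀ A)).le (hsup_pos A B).le
  · intro A B C
    rw [hds, hds, hds]
    have t1 : Real.log (sSup (Set.range fun P => f P A / f P C))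
        ≤ Real.log (sSup (Set.range fun P => f P A / f P B))
          + Real.log (sSup (Set.range fun P => f P B / f P C)) := by
      rw [← Real.log_mul (hsup_pos A B).ne' (hsup_pos B C).ne']
      exact Real.log_le_log (hsup_pos A C) (hsup_mul A B C)
    have t2 : Real.log (sSup (Set.range fun P => f P C / f P A))
        ≤ Real.log (sSup (Set.range fun P => f P C / f P B))
          + Real.log (sSup (Set.range fun P => f P B / f P A)) := by
      rw [← Real.log_mul (hsup_pos C B).ne' (hsup_pos B A).ne']
      exact Real.log_le_log (hsup_pos C A) (hsup_mul C B A)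
    linarith
end

section
/- Let K and J be nonempty sets and f : K × J → ℝ a strictly positive function such that for all A, B ∈ J the supremum sup_{P∈K} f(P,A)/f(P,B) is finite. Fix A, B ∈ J. Then d^s(A,B) = 0 if and only if the function P ↦ g_{AB}(P) is constant on K. Consequently, if f is an effective influence, i.e., for every pair A ≠ B in J the function P ↦ g_{AB}(P) is non-constant on K, then d^s(A,B) > 0 whenever A ≠ B, so d^s is a distance on J. -/
/-!
Write `S` for the range of `g_{AB}`. Its elements are positive, and `S⁻¹` is the range of
`g_{BA}`, which is bounded above; so `inf S > 0` and `sup S / inf S ≥ 1`. The logarithm of this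
ratio vanishes exactly when `sup S = inf S`, i.e. when `S` has at most one point.
-/

open Set Pointwise

section SetsOfPositiveReals

variable {S : Set ℝ}

lemma sInf_pos_of_bddAbove_inv (hne : S.Nonempty) (hpos : ∀ x ∈ S, 0 < x)
    (hinv : BddAbove S⁻¹) : 0 < sInf S := by
  obtain ⟨M, hM⟩ := hinv
  have inv_le : ∀ x ∈ S, x⁻¹ ≤ M := fun x hx => hM (by simpa using hx)
  obtain ⟨x₀, hx₀⟩ := hne
  have hM_pos : 0 < M := (inv_pos.2 (hpos x₀ hx₀)).trans_le (inv_le x₀ hx₀)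
  refine (inv_pos.2 hM_pos).trans_le (le_csInf ⟨x₀, hx₀⟩ fun x hx => ?_)
  exact inv_le_of_inv_le₀ (hpos x hx) (inv_le x hx)

lemma csSup_eq_csInf_iff_subsingleton (hne : S.Nonempty) (hbddA : BddAbove S)
    (hbddB : BddBelow S) : sSup S = sInf S ↔ S.Subsingleton := by
  constructor
  · intro h x hx y hy
    have hx' : x = sInf S := le_antisymm (h ▸ le_csSup hbddA hx) (csInf_le hbddB hx)
    have hy' : y = sInf S := le_antisymm (h ▸ le_csSup hbddA hy) (csInf_le hbddB hy)
    rw [hx', hy']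
  · intro h
    obtain ⟨x, hx⟩ := hne
    rw [h.eq_singleton_of_mem hx, csSup_singleton, csInf_singleton]

lemma one_le_sSup_div_sInf (hne : S.Nonempty) (hpos : ∀ x ∈ S, 0 < x) (hbdd : BddAbove S)
    (hinv : BddAbove S⁻¹) : 1 ≤ sSup S / sInf S :=
  (one_le_div (sInf_pos_of_bddAbove_inv hne hpos hinv)).2
    (csInf_le_csSup hne ⟨0, fun x hx => (hpos x hx).le⟩ hbdd)

lemma log_sSup_div_sInf_nonneg (hpos : ∀ x ∈ S, 0 < x) (hbdd : BddAbove S)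
    (hinv : BddAbove S⁻¹) : 0 ≤ Real.log (sSup S / sInf S) := by
  rcases S.eq_empty_or_nonempty with rfl | hne
  · simp
  · exact Real.log_nonneg (one_le_sSup_div_sInf hne hpos hbdd hinv)

lemma log_sSup_div_sInf_eq_zero_iff (hpos : ∀ x ∈ S, 0 < x) (hbdd : BddAbove S)
    (hinv : BddAbove S⁻¹) : Real.log (sSup S / sInf S) = 0 ↔ S.Subsingleton := by
  rcases S.eq_empty_or_nonempty with rfl | hne
  · simp
  have hone := one_le_sSup_div_sInf hne hpos hbdd hinv
  rw [← csSup_eq_csInf_iff_subsingleton hne hbdd ⟨0, fun x hx => (hpos x hx).le⟩,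
    ← div_eq_one_iff_eq (sInf_pos_of_bddAbove_inv hne hpos hinv).ne']
  constructor
  · intro h
    rcases Real.log_eq_zero.1 h with h | h | h <;> linarith
  · intro h
    rw [h, Real.log_one]

end SetsOfPositiveReals

lemma Set.subsingleton_range_iff {α β : Type*} {g : α → β} :
    (range g).Subsingleton ↔ ∀ a b, g a = g b :=
  ⟨fun h a b => h (mem_range_self a) (mem_range_self b), by
    rintro h _ ⟨a, rfl⟩ _ ⟨b, rfl⟩
    exact h a b⟩

theorem barbilian_extended_eff_distance_general {K J : Type*}
    (f : K → J → ℝ) (hf : ∀ P A, 0 < f P A)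
    (hbdd : ∀ A B : J, BddAbove (Set.range fun P => f P A / f P B)) :
    let ds : J → J → ℝ := fun A B =>
      Real.log (sSup (Set.range fun P => f P A / f P B) /
        sInf (Set.range fun P => f P A / f P B))
    (∀ A B : J, ds A B = 0 ↔ ∀ P Q : K, f P A / f P B = f Q A / f Q B) ∧
    ((∀ A B : J, A ≠ B → ¬ (∀ P Q : K, f P A / f P B = f Q A / f Q B)) →
      ∀ A B : J, A ≠ B → 0 < ds A B) := by
  intro ds
  have hpos : ∀ A B, ∀ x ∈ range fun P => f P A / f P B, 0 < x := by
    rintro A B _ ⟨P, rfl⟩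
    exact div_pos (hf P A) (hf P B)
  have hinv : ∀ A B : J, BddAbove (range fun P => f P A / f P B)⁻¹ := fun A B => by
    simpa only [inv_range, inv_div] using hbdd B A
  have hzero : ∀ A B : J, ds A B = 0 ↔ ∀ P Q : K, f P A / f P B = f Q A / f Q B := fun A B =>
    (log_sSup_div_sInf_eq_zero_iff (hpos A B) (hbdd A B) (hinv A B)).trans subsingleton_range_iff
  refine ⟨hzero, fun heff A B hAB => ?_⟩
  exact (log_sSup_div_sInf_nonneg (hpos A B) (hbdd A B) (hinv A B)).lt_of_ne'
    fun h => heff A B hAB ((hzero A B).1 h)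

/-- `dˢ(A,B) = 0` iff `g_{AB}` is constant on `K`; consequently, for an effective
influence (`g_{AB}` non-constant whenever `A ≠ B`), `dˢ` is positive off the diagonal,
hence a distance. -/
theorem barbilian_extended_eff_distance {K J : Type*} [Nonempty K] [Nonempty J]
    (f : K → J → ℝ) (hf : ∀ P A, 0 < f P A)
    (hbdd : ∀ A B : J, BddAbove (Set.range fun P => f P A / f P B)) :
    let ds : J → J → ℝ := fun A B =>
      Real.log (sSup (Set.range fun P => f P A / f P B) /
        sInf (Set.range fun P => f P A / f P B))
    (∀ A B : J, ds A B = 0 ↔ ∀ P Q : K, f P A / f P B = f Q A / f Q B) ∧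
    ((∀ A B : J, A ≠ B → ¬ (∀ P Q : K, f P A / f P B = f Q A / f Q B)) →
      ∀ A B : J, A ≠ B → 0 < ds A B) :=
  barbilian_extended_eff_distance_general f hf hbdd
end

section
/- Let V be a real inner product space of dimension at least 2 and let a, b be unit vectors in V. Then the supremum over unit vectors m of ( angle(m, a) − angle(m, b) ) equals angle(a, b), where angle denotes the angle between nonzero vectors (the spherical distance on the unit sphere); the supremum is attained at m = −a. Consequently, Barbilian's metrization procedure with K = J the unit sphere and influence f(M,A) = exp( angle(M,A) / 2 ) yields the spherical distance: ln( sup_m e^{(angle(m,a) − angle(m,b))/2} / inf_m e^{(angle(m,a) − angle(m,b))/2} ) = angle(a,b). -/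
/-!
The angle is a metric on the unit sphere, so the triangle inequality gives
`|angle(m,a) - angle(m,b)| ≤ angle(a,b)` for every `m`; the antipodes `m = -a` and `m = -b`
attain the two bounds `± angle(a,b)`. Since the ratio of influences is
`exp((angle(m,a) - angle(m,b))/2)` and `exp` is monotone, its supremum and infimum are
`exp(± angle(a,b)/2)`, whose quotient has logarithm `angle(a,b)`.
-/

open Real Set

theorem Real.log_sSup_div_sInf_exp_half_div_exp_half {X : Type*} {s : Set X} {α β : X → ℝ}
    {M m : ℝ} (hM : IsGreatest ((fun x => α x - β x) '' s) M)
    (hm : IsLeast ((fun x => α x - β x) '' s) m) :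
    log (sSup ((fun x => exp (α x / 2) / exp (β x / 2)) '' s) /
      sInf ((fun x => exp (α x / 2) / exp (β x / 2)) '' s)) = (M - m) / 2 := by
  set φ : ℝ → ℝ := fun t => exp (t / 2)
  have hφ : Monotone φ := fun _ _ h => exp_le_exp.2 (by linarith)
  have himage : (fun x => exp (α x / 2) / exp (β x / 2)) '' s =
      φ '' ((fun x => α x - β x) '' s) := by
    rw [image_image]
    congr 1
    funext x
    rw [← exp_sub, ← sub_div]
  rw [himage, (hφ.map_isGreatest hM).csSup_eq, (hφ.map_isLeast hm).csInf_eq, ← exp_sub,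
    log_exp]
  ring

namespace InnerProductGeometry

variable {V : Type*} [NormedAddCommGroup V] [InnerProductSpace ℝ V]

theorem abs_angle_sub_angle_le (m a b : V) : |angle m a - angle m b| ≤ angle a b := by
  rw [abs_sub_le_iff]
  constructor
  · linarith [angle_le_angle_add_angle m b a, angle_comm a b]
  · linarith [angle_le_angle_add_angle m a b]

theorem angle_neg_sub_angle_neg {a : V} (ha : a ≠ 0) (b : V) :
    angle (-a) a - angle (-a) b = angle a b := by
  rw [angle_neg_left, angle_neg_left, angle_self ha, angle_comm a b]
  ring

theorem isGreatest_angle_sub_angle_image_sphere {a : V} (ha : ‖a‖ = 1) (b : V) :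
    IsGreatest ((fun m => angle m a - angle m b) '' {m : V | ‖m‖ = 1}) (angle a b) := by
  refine ⟨⟨-a, by simpa using ha, angle_neg_sub_angle_neg (norm_ne_zero_iff.1 (by simp [ha])) b⟩,
    ?_⟩
  rintro _ ⟨m, -, rfl⟩
  exact (le_abs_self _).trans (abs_angle_sub_angle_le m a b)

theorem isLeast_angle_sub_angle_image_sphere (a : V) {b : V} (hb : ‖b‖ = 1) :
    IsLeast ((fun m => angle m a - angle m b) '' {m : V | ‖m‖ = 1}) (-angle a b) := by
  have hb0 : b ≠ 0 := norm_ne_zero_iff.1 (by simp [hb])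
  refine ⟨⟨-b, by simpa using hb, ?_⟩, ?_⟩
  · linarith [angle_neg_sub_angle_neg hb0 a, angle_comm a b]
  · rintro _ ⟨m, -, rfl⟩
    exact neg_le_of_abs_le (abs_angle_sub_angle_le m a b)

end InnerProductGeometry

open InnerProductGeometry in
theorem barbilian_spherical_general {V : Type*} [NormedAddCommGroup V]
    [InnerProductSpace ℝ V]
    (a b : V) (ha : ‖a‖ = 1) (hb : ‖b‖ = 1) :
    IsGreatest ((fun m : V => angle m a - angle m b) '' {m : V | ‖m‖ = 1})
      (angle a b) ∧
    angle (-a) a - angle (-a) b = angle a b ∧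
    Real.log
      (sSup ((fun m : V => Real.exp (angle m a / 2) / Real.exp (angle m b / 2)) ''
          {m : V | ‖m‖ = 1}) /
        sInf ((fun m : V => Real.exp (angle m a / 2) / Real.exp (angle m b / 2)) ''
          {m : V | ‖m‖ = 1})) = angle a b := by
  have hsup := isGreatest_angle_sub_angle_image_sphere ha b
  have hinf := isLeast_angle_sub_angle_image_sphere a hb
  refine ⟨hsup, angle_neg_sub_angle_neg (norm_ne_zero_iff.1 (by simp [ha])) b, ?_⟩
  rw [log_sSup_div_sInf_exp_half_div_exp_half hsup hinf]
  ring

open InnerProductGeometry in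
/-- On the unit sphere of a real inner product space of dimension at least 2, for unit
vectors `a, b` the supremum over unit vectors `m` of `angle(m,a) - angle(m,b)` equals
`angle(a,b)` and is attained at `m = -a`; consequently Barbilian's procedure with
influence `f(M,A) = exp(angle(M,A)/2)` yields the spherical distance. -/
theorem barbilian_spherical {V : Type*} [NormedAddCommGroup V]
    [InnerProductSpace ℝ V] (hdim : 2 ≤ Module.rank ℝ V)
    (a b : V) (ha : ‖a‖ = 1) (hb : ‖b‖ = 1) :
    IsGreatest ((fun m : V => angle m a - angle m b) '' {m : V | ‖m‖ = 1})
      (angle a b) ∧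
    angle (-a) a - angle (-a) b = angle a b ∧
    Real.log
      (sSup ((fun m : V => Real.exp (angle m a / 2) / Real.exp (angle m b / 2)) ''
          {m : V | ‖m‖ = 1}) /
        sInf ((fun m : V => Real.exp (angle m a / 2) / Real.exp (angle m b / 2)) ''
          {m : V | ‖m‖ = 1})) = angle a b :=
  barbilian_spherical_general a b ha hb
end

section
/- Let y > 0 and m ∈ ℝ with m ≠ 0, and define R = y·√(m²+1)/(√(m²+1) − 1) and r = y·√(m²+1)/(√(m²+1) + 1). Then (1/4)·(1/R + 1/r)² = 1/y². (This identifies the metric induced by Barbilian's procedure on the upper half-plane J = {(x,y) : y > 0} with boundary K = {y = 0} and influence f(M,A) = ‖MA‖ as the Poincaré metric ds² = (dx² + dy²)/y².) -/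
/-- Poincaré upper half-plane via Barbilian's procedure: with
`R = y√(m²+1)/(√(m²+1) − 1)` and `r = y√(m²+1)/(√(m²+1) + 1)` one has
`(1/4)(1/R + 1/r)² = 1/y²`. -/
theorem barbilian_halfplane_poincare (y m : ℝ) (hy : 0 < y) (hm : m ≠ 0)
    (R r : ℝ)
    (hR : R = y * Real.sqrt (m ^ 2 + 1) / (Real.sqrt (m ^ 2 + 1) - 1))
    (hr : r = y * Real.sqrt (m ^ 2 + 1) / (Real.sqrt (m ^ 2 + 1) + 1)) :
    (1 / 4) * (1 / R + 1 / r) ^ 2 = 1 / y ^ 2 := by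
  have hs1 : (1 : ℝ) < Real.sqrt (m ^ 2 + 1) := by
    have hm2 : (0:ℝ) < m ^ 2 := by positivity
    have : (1 : ℝ) < m ^ 2 + 1 := by linarith
    calc (1 : ℝ) = Real.sqrt 1 := (Real.sqrt_one).symm
      _ < Real.sqrt (m ^ 2 + 1) := Real.sqrt_lt_sqrt (by norm_num) this
  have hs0 : (0 : ℝ) < Real.sqrt (m ^ 2 + 1) := by linarith
  have h1 : Real.sqrt (m ^ 2 + 1) - 1 ≠ 0 := by linarith
  have h2 : Real.sqrt (m ^ 2 + 1) + 1 ≠ 0 := by linarith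
  subst hR hr
  field_simp
  ring
end

section
/- Let ρ > 0, m ∈ ℝ, and let (x, y) ∈ ℝ² with x² + y² < ρ². Define R = (√(m²+1)/2) · (ρ² − x² − y²) / (ρ√(m²+1) − x·m + y) and r = (√(m²+1)/2) · (ρ² − x² − y²) / (ρ√(m²+1) + x·m − y). Then (1/4)·(1/R + 1/r)² = 4ρ² / (ρ² − x² − y²)². (This identifies the metric induced by Barbilian's procedure on the open disk of radius ρ with boundary circle K and influence f(P,A) = ‖PA‖ as ds² = 4ρ²(dx² + dy²)/(ρ² − x² − y²)², the hyperbolic metric of the disk.) -/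
/-- Hyperbolic disk via Barbilian's procedure: for a point `(x,y)` in the open disk of
radius `ρ` and a direction of slope `m`, with the tangent-circle radii `R` and `r`,
one has `(1/4)(1/R + 1/r)² = 4ρ²/(ρ² − x² − y²)²`. -/
theorem barbilian_disk_hyperbolic (ρ m x y : ℝ) (hρ : 0 < ρ)
    (hxy : x ^ 2 + y ^ 2 < ρ ^ 2) (R r : ℝ)
    (hR : R = Real.sqrt (m ^ 2 + 1) / 2 *
      ((ρ ^ 2 - x ^ 2 - y ^ 2) / (ρ * Real.sqrt (m ^ 2 + 1) - x * m + y)))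
    (hr : r = Real.sqrt (m ^ 2 + 1) / 2 *
      ((ρ ^ 2 - x ^ 2 - y ^ 2) / (ρ * Real.sqrt (m ^ 2 + 1) + x * m - y))) :
    (1 / 4) * (1 / R + 1 / r) ^ 2 = 4 * ρ ^ 2 / (ρ ^ 2 - x ^ 2 - y ^ 2) ^ 2 := by
  set s := Real.sqrt (m ^ 2 + 1) with hsdef
  have hs2 : s ^ 2 = m ^ 2 + 1 := Real.sq_sqrt (by positivity)
  have hs0 : 0 < s := Real.sqrt_pos.2 (by positivity)
  have hD : 0 < ρ ^ 2 - x ^ 2 - y ^ 2 := by linarith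
  have hkey : (x * m - y) ^ 2 < (ρ * s) ^ 2 := by
    nlinarith [sq_nonneg (x + y * m), sq_nonneg x, sq_nonneg y]
  have hρs : 0 < ρ * s := by positivity
  have h1 : 0 < ρ * s - x * m + y := by nlinarith
  have h2 : 0 < ρ * s + x * m - y := by nlinarith
  subst hR hr
  field_simp
  ring_nf
end

section
/- Let K = {(x,0) : x > 0} ∪ {(0,y) : y > 0} ⊆ ℝ² and J = {(x,y) : x > 0, y > 0}. For all A, B ∈ J, the function g_{AB} : K → ℝ given by g_{AB}(M) = ‖MA‖/‖MB‖ (Euclidean distances) attains both a maximum and a minimum on K. Consequently d^B(A,B) = ln( max_{M∈K} g_{AB}(M) / min_{M∈K} g_{AB}(M) ) defines a Barbilian distance on J. -/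
/-- The union of the positive coordinate half-axes in the plane. -/
def barbilianQuadrantK : Set (EuclideanSpace ℝ (Fin 2)) :=
  {p | (p 1 = 0 ∧ 0 < p 0) ∨ (p 0 = 0 ∧ 0 < p 1)}

/-- The open first quadrant in the plane. -/
def barbilianQuadrantJ : Set (EuclideanSpace ℝ (Fin 2)) :=
  {p | 0 < p 0 ∧ 0 < p 1}

/-- Barbilian distance on the open first quadrant, with `K` the union of the positive
half-axes and influence `f(M,A) = ‖MA‖`. -/
noncomputable def barbilianQuadrantD (A B : EuclideanSpace ℝ (Fin 2)) : ℝ :=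
  Real.log (sSup ((fun M => dist M A / dist M B) '' barbilianQuadrantK) /
    sInf ((fun M => dist M A / dist M B) '' barbilianQuadrantK))

/-!
Write `g_{AB}(M) = |MA| / |MB|` and `ρ(A, B) = log sup_K g_{AB}`. Since `g_{BA} = 1 / g_{AB}`, the
minimum of `g_{AB}` is `1 / max g_{BA}`, so `d(A, B) = ρ(A, B) + ρ(B, A)`. Symmetry is then
obvious, and `g_{AC} = g_{AB} g_{BC}` makes `ρ` subadditive, which gives the triangle inequality.
When `A ≠ B` some point of `K` is strictly closer to `B` than to `A` and another one strictly
closer to `A`, so `ρ(A, B)` and `ρ(B, A)` are positive.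

The maximum exists because `g_{AB} → 1` at infinity while `g_{AB} > 1` somewhere on `K`, so
`g_{AB}` has a maximum on the closed set `K ∪ {0}`, and it is not attained at the origin: the
inversion in the unit circle preserves `K` and `J` and turns `g_{AB}(M) / g_{AB}(0)` into
`g_{A'B'}(M')`, which exceeds `1` at suitable points `M'` of `K`, as before.
-/

open Real Set Filter Metric Bornology Topology

noncomputable section Barbilian

variable {X : Type*} [PseudoMetricSpace X] {K J : Set X} {A B C M N : X}

def distRatio (A B M : X) : ℝ := dist M A / dist M B

def barbilianDist (K : Set X) (A B : X) : ℝ :=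
  log (sSup (distRatio A B '' K) / sInf (distRatio A B '' K))

/-- `barbilianDist` is the symmetrization of this asymmetric distance. -/
def logSupDistRatio (K : Set X) (A B : X) : ℝ :=
  log (sSup (distRatio A B '' K))

lemma IsMaxOn.csSup_image_eq {α β : Type*} [ConditionallyCompleteLattice α] {f : β → α}
    {s : Set β} {b : β} (hb : b ∈ s) (h : IsMaxOn f s b) : sSup (f '' s) = f b :=
  IsGreatest.csSup_eq ⟨mem_image_of_mem f hb, forall_mem_image.2 h⟩

lemma IsMinOn.csInf_image_eq {α β : Type*} [ConditionallyCompleteLattice α] {f : β → α}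
    {s : Set β} {b : β} (hb : b ∈ s) (h : IsMinOn f s b) : sInf (f '' s) = f b :=
  IsLeast.csInf_eq ⟨mem_image_of_mem f hb, forall_mem_image.2 h⟩

lemma distRatio_swap (A B M : X) : distRatio B A M = (distRatio A B M)⁻¹ :=
  (inv_div _ _).symm

lemma distRatio_mul_distRatio (h : dist M B ≠ 0) :
    distRatio A B M * distRatio B C M = distRatio A C M :=
  div_mul_div_cancel₀ h

lemma distRatio_pos (hA : 0 < dist M A) (hB : 0 < dist M B) : 0 < distRatio A B M :=
  div_pos hA hB

lemma IsMaxOn.isMinOn_distRatio_swap (hA : ∀ M ∈ K, 0 < dist M A)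
    (hB : ∀ M ∈ K, 0 < dist M B) (h : IsMaxOn (distRatio B A) K N) :
    IsMinOn (distRatio A B) K N :=
  isMinOn_iff.2 fun M hM => by
    rw [distRatio_swap B A, distRatio_swap B A]
    exact inv_anti₀ (distRatio_pos (hB M hM) (hA M hM)) (isMaxOn_iff.1 h M hM)

lemma logSupDistRatio_self (hK : K.Nonempty) (hA : ∀ M ∈ K, 0 < dist M A) :
    logSupDistRatio K A A = 0 := by
  have : EqOn (distRatio A A) 1 K := fun M hM => div_self (hA M hM).ne'
  rw [logSupDistRatio, this.image_eq, Pi.one_def, hK.image_const, csSup_singleton, log_one]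

lemma logSupDistRatio_pos (hM : M ∈ K) (hB : 0 < dist M B) (hMAB : dist M B < dist M A)
    (hbdd : BddAbove (distRatio A B '' K)) : 0 < logSupDistRatio K A B :=
  log_pos <| ((one_lt_div hB).2 hMAB).trans_le (le_csSup hbdd (mem_image_of_mem _ hM))

lemma exists_isMinOn_distRatio (hpos : ∀ M ∈ K, ∀ A ∈ J, 0 < dist M A)
    (hmax : ∀ A ∈ J, ∀ B ∈ J, ∃ M ∈ K, IsMaxOn (distRatio A B) K M) (hA : A ∈ J) (hB : B ∈ J) :
    ∃ N ∈ K, IsMinOn (distRatio A B) K N :=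
  let ⟨N, hN, h⟩ := hmax B hB A hA
  ⟨N, hN, h.isMinOn_distRatio_swap (hpos · · A hA) (hpos · · B hB)⟩

lemma barbilianDist_eq_add (hpos : ∀ M ∈ K, ∀ A ∈ J, 0 < dist M A)
    (hmax : ∀ A ∈ J, ∀ B ∈ J, ∃ M ∈ K, IsMaxOn (distRatio A B) K M) (hA : A ∈ J) (hB : B ∈ J) :
    barbilianDist K A B = logSupDistRatio K A B + logSupDistRatio K B A := by
  obtain ⟨M, hM, hmaxAB⟩ := hmax A hA B hB
  obtain ⟨N, hN, hmaxBA⟩ := hmax B hB A hA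
  have hminAB := hmaxBA.isMinOn_distRatio_swap (hpos · · A hA) (hpos · · B hB)
  rw [barbilianDist, logSupDistRatio, logSupDistRatio, hmaxAB.csSup_image_eq hM,
    hminAB.csInf_image_eq hN, hmaxBA.csSup_image_eq hN, distRatio_swap B A N, div_inv_eq_mul,
    log_mul (distRatio_pos (hpos M hM A hA) (hpos M hM B hB)).ne'
      (distRatio_pos (hpos N hN B hB) (hpos N hN A hA)).ne']

lemma logSupDistRatio_triangle (hpos : ∀ M ∈ K, ∀ A ∈ J, 0 < dist M A)
    (hmax : ∀ A ∈ J, ∀ B ∈ J, ∃ M ∈ K, IsMaxOn (distRatio A B) K M)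
    (hA : A ∈ J) (hB : B ∈ J) (hC : C ∈ J) :
    logSupDistRatio K A C ≤ logSupDistRatio K A B + logSupDistRatio K B C := by
  obtain ⟨M, hM, hmaxAC⟩ := hmax A hA C hC
  obtain ⟨_, _, hmaxAB⟩ := hmax A hA B hB
  obtain ⟨_, _, hmaxBC⟩ := hmax B hB C hC
  have hgAB : distRatio A B M ≤ sSup (distRatio A B '' K) :=
    le_csSup hmaxAB.bddAbove (mem_image_of_mem _ hM)
  have hgBC : distRatio B C M ≤ sSup (distRatio B C '' K) :=
    le_csSup hmaxBC.bddAbove (mem_image_of_mem _ hM)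
  have hposAB := distRatio_pos (hpos M hM A hA) (hpos M hM B hB)
  have hposBC := distRatio_pos (hpos M hM B hB) (hpos M hM C hC)
  rw [logSupDistRatio, logSupDistRatio, logSupDistRatio, hmaxAC.csSup_image_eq hM,
    ← log_mul (hposAB.trans_le hgAB).ne' (hposBC.trans_le hgBC).ne',
    ← distRatio_mul_distRatio (hpos M hM B hB).ne']
  exact log_le_log (mul_pos hposAB hposBC)
    (mul_le_mul hgAB hgBC hposBC.le (hposAB.le.trans hgAB))

lemma barbilianDist_comm (hpos : ∀ M ∈ K, ∀ A ∈ J, 0 < dist M A)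
    (hmax : ∀ A ∈ J, ∀ B ∈ J, ∃ M ∈ K, IsMaxOn (distRatio A B) K M) (hA : A ∈ J) (hB : B ∈ J) :
    barbilianDist K A B = barbilianDist K B A := by
  rw [barbilianDist_eq_add hpos hmax hA hB, barbilianDist_eq_add hpos hmax hB hA, add_comm]

lemma barbilianDist_triangle (hpos : ∀ M ∈ K, ∀ A ∈ J, 0 < dist M A)
    (hmax : ∀ A ∈ J, ∀ B ∈ J, ∃ M ∈ K, IsMaxOn (distRatio A B) K M)
    (hA : A ∈ J) (hB : B ∈ J) (hC : C ∈ J) :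
    barbilianDist K A C ≤ barbilianDist K A B + barbilianDist K B C := by
  rw [barbilianDist_eq_add hpos hmax hA hC, barbilianDist_eq_add hpos hmax hA hB,
    barbilianDist_eq_add hpos hmax hB hC]
  linarith [logSupDistRatio_triangle hpos hmax hA hB hC,
    logSupDistRatio_triangle hpos hmax hC hB hA]

lemma barbilianDist_eq_zero_iff (hpos : ∀ M ∈ K, ∀ A ∈ J, 0 < dist M A)
    (hmax : ∀ A ∈ J, ∀ B ∈ J, ∃ M ∈ K, IsMaxOn (distRatio A B) K M)
    (hsep : ∀ A ∈ J, ∀ B ∈ J, A ≠ B → ∃ M ∈ K, dist M B < dist M A) (hA : A ∈ J) (hB : B ∈ J) :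
    barbilianDist K A B = 0 ↔ A = B := by
  rw [barbilianDist_eq_add hpos hmax hA hB]
  constructor
  · intro h
    by_contra hAB
    obtain ⟨M, hM, hMAB⟩ := hsep A hA B hB hAB
    obtain ⟨N, hN, hNBA⟩ := hsep B hB A hA (Ne.symm hAB)
    obtain ⟨_, _, hmaxAB⟩ := hmax A hA B hB
    obtain ⟨_, _, hmaxBA⟩ := hmax B hB A hA
    linarith [logSupDistRatio_pos hM (hpos M hM B hB) hMAB hmaxAB.bddAbove,
      logSupDistRatio_pos hN (hpos N hN A hA) hNBA hmaxBA.bddAbove]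
  · rintro rfl
    obtain ⟨M, hM, -⟩ := hmax A hA A hA
    rw [logSupDistRatio_self ⟨M, hM⟩ (hpos · · A hA), add_zero]

lemma tendsto_distRatio_cobounded (A B : X) : Tendsto (distRatio A B) (cobounded X) (𝓝 1) := by
  have hB := tendsto_dist_right_cobounded_atTop B
  rw [tendsto_iff_dist_tendsto_zero]
  refine squeeze_zero' (Eventually.of_forall fun _ => dist_nonneg) ?_
    (tendsto_const_nhds.div_atTop hB (a := dist A B))
  filter_upwards [hB.eventually_gt_atTop 0] with N hN
  rw [Real.dist_eq, distRatio, div_sub_one hN.ne', abs_div, abs_of_pos hN]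
  gcongr
  simpa only [dist_comm N] using abs_dist_sub_le A B N

end Barbilian

section Inversion

open EuclideanGeometry

variable {V P : Type*} [NormedAddCommGroup V] [InnerProductSpace ℝ V] [MetricSpace P]
  [NormedAddTorsor V P]

lemma distRatio_inversion {c A B M : P} {R : ℝ} (hA : A ≠ c) (hB : B ≠ c) (hM : M ≠ c)
    (hR : R ≠ 0) :
    distRatio (inversion c R A) (inversion c R B) (inversion c R M) =
      distRatio A B M / distRatio A B c := by
  simp only [distRatio, dist_inversion_inversion hM hA, dist_inversion_inversion hM hB,
    dist_comm c]
  have := dist_pos.2 hA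
  have := dist_pos.2 hB
  have := dist_pos.2 hM
  field_simp

lemma inversion_zero_eq_smul (R : ℝ) (p : V) : inversion 0 R p = (R / ‖p‖) ^ 2 • p := by
  simp [inversion]

end Inversion

section Quadrant

open EuclideanGeometry

lemma dist_single_sq {ι : Type*} [Fintype ι] [DecidableEq ι] (i : ι) (t : ℝ)
    (A : EuclideanSpace ℝ ι) :
    dist (EuclideanSpace.single i t) A ^ 2 = ‖A‖ ^ 2 - 2 * t * A i + t ^ 2 := by
  rw [dist_eq_norm, norm_sub_sq_real, EuclideanSpace.inner_single_left, PiLp.norm_single]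
  simp only [Real.norm_eq_abs, sq_abs, starRingEnd_apply, star_trivial]
  ring

lemma exists_dist_single_lt {ι : Type*} [Fintype ι] [DecidableEq ι] {A B : EuclideanSpace ℝ ι}
    (hB : ∀ i, 0 ≤ B i) (hAB : A ≠ B) :
    ∃ i, ∃ t > 0, dist (EuclideanSpace.single i t) B < dist (EuclideanSpace.single i t) A := by
  suffices ∃ i, ∃ t > 0, 2 * t * (A i - B i) < ‖A‖ ^ 2 - ‖B‖ ^ 2 by
    obtain ⟨i, t, ht, h⟩ := this
    refine ⟨i, t, ht, (pow_lt_pow_iff_left₀ dist_nonneg dist_nonneg two_ne_zero).1 ?_⟩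
    rw [dist_single_sq, dist_single_sq]
    linarith
  set c := ‖A‖ ^ 2 - ‖B‖ ^ 2
  by_cases h : ∃ i, A i < B i
  · -- far out along an axis on which `B` leads
    obtain ⟨i, hi⟩ := h
    have hBA : 0 < B i - A i := by linarith
    refine ⟨i, (|c| + 1) / (2 * (B i - A i)), by positivity, ?_⟩
    have : 2 * ((|c| + 1) / (2 * (B i - A i))) * (A i - B i) = -(|c| + 1) := by
      field_simp
      ring
    linarith [neg_abs_le c]
  · -- now `B ≤ A` coordinatewise, so `‖B‖ < ‖A‖` and points close to the origin work
    push Not at h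
    obtain ⟨j, hj⟩ : ∃ j, A j ≠ B j := by
      by_contra! h'
      exact hAB (PiLp.ext h')
    have hBA : 0 < A j - B j := by linarith [(h j).lt_of_ne' hj]
    have hc : 0 < c := by
      simp only [c, EuclideanSpace.real_norm_sq_eq, ← Finset.sum_sub_distrib]
      exact Finset.sum_pos' (fun i _ => by nlinarith [hB i, h i])
        ⟨j, Finset.mem_univ _, by nlinarith [hB j]⟩
    refine ⟨j, c / (4 * (A j - B j)), by positivity, ?_⟩
    field_simp
    linarith

lemma single_mem_barbilianQuadrantK (i : Fin 2) {t : ℝ} (ht : 0 < t) :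
    EuclideanSpace.single i t ∈ barbilianQuadrantK := by
  fin_cases i <;> simp [barbilianQuadrantK, ht]

lemma ne_zero_of_mem_barbilianQuadrantK {p : EuclideanSpace ℝ (Fin 2)}
    (hp : p ∈ barbilianQuadrantK) : p ≠ 0 := by
  rintro rfl
  simp [barbilianQuadrantK] at hp

lemma ne_zero_of_mem_barbilianQuadrantJ {p : EuclideanSpace ℝ (Fin 2)}
    (hp : p ∈ barbilianQuadrantJ) : p ≠ 0 := by
  rintro rfl
  simp [barbilianQuadrantJ] at hp

lemma dist_pos_of_mem_barbilianQuadrantJ {M A : EuclideanSpace ℝ (Fin 2)}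
    (hM : M ∈ insert 0 barbilianQuadrantK) (hA : A ∈ barbilianQuadrantJ) : 0 < dist M A := by
  refine dist_pos.2 ?_
  rintro rfl
  obtain ⟨h0, h1⟩ := hA
  rcases hM with rfl | ⟨h, -⟩ | ⟨h, -⟩
  · simp at h0
  · exact h1.ne' h
  · exact h0.ne' h

lemma isClosed_insert_zero_barbilianQuadrantK : IsClosed (insert 0 barbilianQuadrantK) := by
  have hcoord (i : Fin 2) : Continuous fun p : EuclideanSpace ℝ (Fin 2) => p i :=
    PiLp.continuous_apply 2 _ i
  have : insert 0 barbilianQuadrantK =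
      {p : EuclideanSpace ℝ (Fin 2) | p 1 = 0 ∧ 0 ≤ p 0} ∪ {p | p 0 = 0 ∧ 0 ≤ p 1} := by
    ext p
    simp only [mem_insert_iff, barbilianQuadrantK, mem_union, mem_ofPred]
    rw [show p = 0 ↔ p 0 = 0 ∧ p 1 = 0 by simp [PiLp.ext_iff, Fin.forall_fin_two]]
    grind
  rw [this]
  exact ((isClosed_eq (hcoord 1) continuous_const).inter
    (isClosed_le continuous_const (hcoord 0))).union
    ((isClosed_eq (hcoord 0) continuous_const).inter (isClosed_le continuous_const (hcoord 1)))

lemma inversion_zero_mem_barbilianQuadrantK {R : ℝ} (hR : R ≠ 0) {p : EuclideanSpace ℝ (Fin 2)}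
    (hp : p ∈ barbilianQuadrantK) : inversion 0 R p ∈ barbilianQuadrantK := by
  have hc : 0 < (R / ‖p‖) ^ 2 := by
    have := norm_pos_iff.2 (ne_zero_of_mem_barbilianQuadrantK hp)
    positivity
  rw [inversion_zero_eq_smul]
  rcases hp with ⟨h1, h0⟩ | ⟨h0, h1⟩
  · exact Or.inl ⟨by simp [h1], by simpa using mul_pos hc h0⟩
  · exact Or.inr ⟨by simp [h0], by simpa using mul_pos hc h1⟩

lemma inversion_zero_mem_barbilianQuadrantJ {R : ℝ} (hR : R ≠ 0) {p : EuclideanSpace ℝ (Fin 2)}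
    (hp : p ∈ barbilianQuadrantJ) : inversion 0 R p ∈ barbilianQuadrantJ := by
  have hc : 0 < (R / ‖p‖) ^ 2 := by
    have := norm_pos_iff.2 (ne_zero_of_mem_barbilianQuadrantJ hp)
    positivity
  rw [inversion_zero_eq_smul]
  exact ⟨by simpa using mul_pos hc hp.1, by simpa using mul_pos hc hp.2⟩

lemma exists_mem_barbilianQuadrantK_dist_lt {A B : EuclideanSpace ℝ (Fin 2)}
    (hB : B ∈ barbilianQuadrantJ) (hAB : A ≠ B) : ∃ M ∈ barbilianQuadrantK, dist M B < dist M A :=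
  let ⟨i, _, ht, h⟩ := exists_dist_single_lt (Fin.forall_fin_two.2 ⟨hB.1.le, hB.2.le⟩) hAB
  ⟨_, single_mem_barbilianQuadrantK i ht, h⟩

lemma exists_distRatio_zero_lt {A B : EuclideanSpace ℝ (Fin 2)} (hA : A ∈ barbilianQuadrantJ)
    (hB : B ∈ barbilianQuadrantJ) (hAB : A ≠ B) :
    ∃ M ∈ barbilianQuadrantK, distRatio A B 0 < distRatio A B M := by
  have hB' := inversion_zero_mem_barbilianQuadrantJ one_ne_zero hB
  obtain ⟨N, hN, hNlt⟩ := exists_mem_barbilianQuadrantK_dist_lt hB'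
    ((inversion_injective 0 one_ne_zero).ne hAB)
  have hN' := inversion_zero_mem_barbilianQuadrantK one_ne_zero hN
  refine ⟨_, hN', ?_⟩
  have h := distRatio_inversion (ne_zero_of_mem_barbilianQuadrantJ hA)
    (ne_zero_of_mem_barbilianQuadrantJ hB) (ne_zero_of_mem_barbilianQuadrantK hN') one_ne_zero
  rw [inversion_inversion 0 one_ne_zero] at h
  have h0 : 0 < distRatio A B 0 := distRatio_pos
    (dist_pos_of_mem_barbilianQuadrantJ (mem_insert 0 _) hA)
    (dist_pos_of_mem_barbilianQuadrantJ (mem_insert 0 _) hB)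
  have h1 : 1 < distRatio (inversion 0 1 A) (inversion 0 1 B) N :=
    (one_lt_div (dist_pos_of_mem_barbilianQuadrantJ (mem_insert_of_mem 0 hN) hB')).2 hNlt
  rwa [h, one_lt_div h0] at h1

lemma exists_isMaxOn_distRatio_barbilianQuadrantK {A B : EuclideanSpace ℝ (Fin 2)}
    (hA : A ∈ barbilianQuadrantJ) (hB : B ∈ barbilianQuadrantJ) :
    ∃ M ∈ barbilianQuadrantK, IsMaxOn (distRatio A B) barbilianQuadrantK M := by
  have hpos {P M} (hP : P ∈ barbilianQuadrantJ) (hM : M ∈ barbilianQuadrantK) :=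
    dist_pos_of_mem_barbilianQuadrantJ (mem_insert_of_mem 0 hM) hP
  rcases eq_or_ne A B with rfl | hAB
  · refine ⟨_, single_mem_barbilianQuadrantK 0 one_pos, isMaxOn_iff.2 fun N hN => ?_⟩
    rw [distRatio, distRatio, div_self (hpos hA hN).ne',
      div_self (hpos hA (single_mem_barbilianQuadrantK 0 one_pos)).ne']
  obtain ⟨M₁, hM₁, hM₁lt⟩ := exists_mem_barbilianQuadrantK_dist_lt hB hAB
  have hfar : ∀ᶠ N in cocompact _ ⊓ 𝓟 (insert 0 barbilianQuadrantK),
      distRatio A B N ≤ distRatio A B M₁ := by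
    refine Eventually.filter_mono inf_le_left ?_
    rw [← cobounded_eq_cocompact]
    exact (tendsto_distRatio_cobounded A B).eventually
      (ge_mem_nhds ((one_lt_div (hpos hB hM₁)).2 hM₁lt))
  have hcont : ContinuousOn (distRatio A B) (insert 0 barbilianQuadrantK) :=
    (continuous_id.dist continuous_const).continuousOn.div
      (continuous_id.dist continuous_const).continuousOn
      fun M hM => (dist_pos_of_mem_barbilianQuadrantJ hM hB).ne'
  obtain ⟨M, rfl | hM, hmax⟩ := hcont.exists_isMaxOn' isClosed_insert_zero_barbilianQuadrantK
    (mem_insert_of_mem 0 hM₁) hfar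
  · obtain ⟨N, hN, hlt⟩ := exists_distRatio_zero_lt hA hB hAB
    exact absurd (hmax (mem_insert_of_mem 0 hN)) hlt.not_ge
  · exact ⟨M, hM, hmax.on_subset (subset_insert 0 _)⟩

end Quadrant

/-- On the open first quadrant `J` with `K` the union of the positive half-axes and
influence `f(M,A) = ‖MA‖`, each ratio `g_{AB}(M) = ‖MA‖/‖MB‖` attains a maximum and a
minimum on `K`; consequently `d^B(A,B) = log(max g_{AB} / min g_{AB})` is a distance
on `J`. -/
theorem barbilian_quadrant_distance :
    (∀ A ∈ barbilianQuadrantJ, ∀ B ∈ barbilianQuadrantJ,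
      (∃ M ∈ barbilianQuadrantK, ∀ N ∈ barbilianQuadrantK,
        dist N A / dist N B ≤ dist M A / dist M B) ∧
      (∃ M ∈ barbilianQuadrantK, ∀ N ∈ barbilianQuadrantK,
        dist M A / dist M B ≤ dist N A / dist N B)) ∧
    (∀ A ∈ barbilianQuadrantJ, ∀ B ∈ barbilianQuadrantJ,
      barbilianQuadrantD A B = barbilianQuadrantD B A) ∧
    (∀ A ∈ barbilianQuadrantJ, ∀ B ∈ barbilianQuadrantJ,
      (barbilianQuadrantD A B = 0 ↔ A = B)) ∧
    (∀ A ∈ barbilianQuadrantJ, ∀ B ∈ barbilianQuadrantJ, ∀ C ∈ barbilianQuadrantJ,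
      barbilianQuadrantD A C ≤ barbilianQuadrantD A B + barbilianQuadrantD B C) := by
  have hpos : ∀ M ∈ barbilianQuadrantK, ∀ A ∈ barbilianQuadrantJ, 0 < dist M A :=
    fun M hM A hA => dist_pos_of_mem_barbilianQuadrantJ (mem_insert_of_mem 0 hM) hA
  have hmax : ∀ A ∈ barbilianQuadrantJ, ∀ B ∈ barbilianQuadrantJ,
      ∃ M ∈ barbilianQuadrantK, IsMaxOn (distRatio A B) barbilianQuadrantK M :=
    fun A hA B hB => exists_isMaxOn_distRatio_barbilianQuadrantK hA hB
  have hsep : ∀ A ∈ barbilianQuadrantJ, ∀ B ∈ barbilianQuadrantJ, A ≠ B →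
      ∃ M ∈ barbilianQuadrantK, dist M B < dist M A :=
    fun _ _ _ hB hAB => exists_mem_barbilianQuadrantK_dist_lt hB hAB
  refine ⟨fun A hA B hB => ⟨?_, ?_⟩, fun A hA B hB => barbilianDist_comm hpos hmax hA hB,
    fun A hA B hB => barbilianDist_eq_zero_iff hpos hmax hsep hA hB,
    fun A hA B hB C hC => barbilianDist_triangle hpos hmax hA hB hC⟩
  · obtain ⟨M, hM, h⟩ := hmax A hA B hB
    exact ⟨M, hM, isMaxOn_iff.1 h⟩
  · obtain ⟨M, hM, h⟩ := exists_isMinOn_distRatio hpos hmax hA hB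
    exact ⟨M, hM, isMinOn_iff.1 h⟩
end

section
/- Define, for x > 0, y > 0, u > 0 and v ∈ ℝ, g₁₁(x, y, u, v) = u·( y·v + x·u + (x + y)·√(u² + v²) )² / ( 4·x·y·(u² + v²) ). There exist x > 0, y > 0, u > 0, v > 0 such that the derivative of the function t ↦ g₁₁(x, y, u, t) at t = v is nonzero. Hence, since g₁₂ ≡ 0 (so ∂g₁₂/∂u ≡ 0), the Cartan tensor C_{ijk} = (1/2)·∂g_{ij}/∂ẋ^k of this metric is not totally symmetric. -/
/-- Coefficient `g₁₁ = g₂₂` of the generalized Lagrange metric on the first quadrant. -/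
noncomputable def quadrantG11' (x y u v : ℝ) : ℝ :=
  u * (y * v + x * u + (x + y) * Real.sqrt (u ^ 2 + v ^ 2)) ^ 2 /
    (4 * x * y * (u ^ 2 + v ^ 2))

/-- Coefficient `g₁₂ = g₂₁ ≡ 0` of the generalized Lagrange metric on the first
quadrant. -/
def quadrantG12' (_x _y _u _v : ℝ) : ℝ := 0

/-!
With `r = √(u² + v²)` and `N = y v + x u + (x + y) r`, the identity `r² = u² + v²` collapses the
quotient rule to `∂g₁₁/∂v = u² N (y u - x v) / (2 x y r⁴)`. On the open quadrant `N > 0`, since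
`r ≥ |v|`, so `∂g₁₁/∂v` vanishes only on the line `y u = x v`, whereas `∂g₁₂/∂u = 0` everywhere.
-/

open Real

theorem hasDerivAt_quadrantG11' {x y u : ℝ} (v : ℝ) (hx : x ≠ 0) (hy : y ≠ 0) (hu : u ≠ 0) :
    HasDerivAt (fun t => quadrantG11' x y u t)
      (u ^ 2 * (y * v + x * u + (x + y) * √(u ^ 2 + v ^ 2)) * (y * u - x * v) /
        (2 * x * y * (u ^ 2 + v ^ 2) ^ 2)) v := by
  have hq : u ^ 2 + v ^ 2 ≠ 0 := by positivity
  have hr : √(u ^ 2 + v ^ 2) ≠ 0 := by positivity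
  have hrr : √(u ^ 2 + v ^ 2) ^ 2 = u ^ 2 + v ^ 2 := sq_sqrt (by positivity)
  have hsq : HasDerivAt (fun t => u ^ 2 + t ^ 2) (2 * v) v := by
    simpa using (hasDerivAt_pow 2 v).const_add (u ^ 2)
  have hN := (((hasDerivAt_id v).const_mul y).add_const (x * u)).add
    ((hsq.sqrt hq).const_mul (x + y))
  refine (((hN.pow 2).const_mul u).div (hsq.const_mul (4 * x * y)) (by simp [*])).congr_deriv ?_
  simp only [Pi.add_apply, Pi.pow_apply, id]
  field_simp
  generalize √(u ^ 2 + v ^ 2) = r at *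
  linear_combination -4 * (x + y) * v * (y * v + u * x + (x + y) * r) * hrr

theorem quadrantG11'_numerator_pos {x y u : ℝ} (v : ℝ) (hx : 0 < x) (hy : 0 < y) (hu : 0 < u) :
    0 < y * v + x * u + (x + y) * √(u ^ 2 + v ^ 2) := by
  have hv : |v| ≤ √(u ^ 2 + v ^ 2) := abs_le_sqrt (by nlinarith)
  nlinarith [neg_abs_le v, abs_nonneg v, mul_pos hx hu]

theorem deriv_quadrantG11'_ne_zero {x y u v : ℝ} (hx : 0 < x) (hy : 0 < y) (hu : 0 < u)
    (h : y * u ≠ x * v) : deriv (fun t => quadrantG11' x y u t) v ≠ 0 := by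
  rw [(hasDerivAt_quadrantG11' v hx.ne' hy.ne' hu.ne').deriv]
  have hN := quadrantG11'_numerator_pos v hx hy hu
  have hq : u ^ 2 + v ^ 2 ≠ 0 := by positivity
  exact div_ne_zero (mul_ne_zero (by positivity) (sub_ne_zero.mpr h)) (by positivity)

/-- The Cartan tensor of the quadrant metric is not totally symmetric: there is a point
and direction at which `∂g₁₁/∂v ≠ 0` while `∂g₁₂/∂u ≡ 0`, so
`∂g₁₁/∂v ≠ ∂g₁₂/∂u` there. -/
theorem quadrant_cartan_not_symmetric :
    ∃ x y u v : ℝ, 0 < x ∧ 0 < y ∧ 0 < u ∧ 0 < v ∧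
      deriv (fun t => quadrantG11' x y u t) v ≠ 0 ∧
      deriv (fun s => quadrantG12' x y s v) u = 0 ∧
      deriv (fun t => quadrantG11' x y u t) v ≠
        deriv (fun s => quadrantG12' x y s v) u := by
  have hG11 : deriv (fun t => quadrantG11' 1 1 1 t) 2 ≠ 0 :=
    deriv_quadrantG11'_ne_zero one_pos one_pos one_pos (by norm_num)
  have hG12 : deriv (fun s => quadrantG12' 1 1 s 2) 1 = 0 := deriv_const 1 0
  exact ⟨1, 1, 1, 2, one_pos, one_pos, one_pos, two_pos, hG11, hG12, hG12 ▸ hG11⟩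
end
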